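/- Let A be the adjacency matrix of a finite graph (symmetric, nonnegative integer entries, zero diagonal), let κ(v) be the degree of vertex v (row sum of A), and let q : V → ℝ. If A + diag(q) and A - diag(κ) have the same spectrum (equal characteristic polynomials) then q = -κ. -/

import Mathlib

/-!
For a symmetric matrix `A` with nonnegative entries, `x ⬝ (diag κ - A) x = ½ ∑ A u v (x u - x v)²`,
so `-(A - diag κ)` is positive semidefinite, and by isospectrality so is `M := -(A + diag q)`.
Comparing traces gives `∑ (κ + q) = 0`, which says that the quadratic form of `M` vanishes on the
all-ones vector `𝟙`. A positive semidefinite matrix annihilates every vector on which its form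
vanishes, so `M 𝟙 = -(κ + q)` is zero.
-/

open Matrix

namespace Matrix

variable {n : Type*} [Fintype n] [DecidableEq n]

-- The graph Laplacian `-Δ = A - diag κ` is `-A.weightedLaplacian`.
def weightedLaplacian {R : Type*} [CommRing R] (A : Matrix n n R) : Matrix n n R :=
  diagonal (fun i => ∑ j, A i j) - A

theorem weightedLaplacian_mulVec {R : Type*} [CommRing R] (A : Matrix n n R) (x : n → R) (i : n) :
    (A.weightedLaplacian *ᵥ x) i = ∑ j, A i j * (x i - x j) := by
  rw [weightedLaplacian, sub_mulVec, Pi.sub_apply, mulVec_diagonal, Finset.sum_mul]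
  simp only [mulVec, dotProduct, mul_sub, Finset.sum_sub_distrib]

theorem two_mul_dotProduct_weightedLaplacian_mulVec {R : Type*} [CommRing R]
    {A : Matrix n n R} (hA : A.IsSymm) (x : n → R) :
    2 * (x ⬝ᵥ A.weightedLaplacian *ᵥ x) = ∑ i, ∑ j, A i j * (x i - x j) ^ 2 := by
  have hform : x ⬝ᵥ A.weightedLaplacian *ᵥ x = ∑ i, ∑ j, A i j * (x i * (x i - x j)) := by
    simp only [dotProduct, weightedLaplacian_mulVec, Finset.mul_sum]
    exact Finset.sum_congr rfl fun i _ => Finset.sum_congr rfl fun j _ => by ring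
  have hswap : ∑ i, ∑ j, A i j * (x i * (x i - x j)) =
      ∑ i, ∑ j, A i j * (x j * (x j - x i)) := by
    rw [Finset.sum_comm]
    exact Finset.sum_congr rfl fun i _ => Finset.sum_congr rfl fun j _ => by
      rw [hA.apply i j]
  rw [two_mul, hform]
  nth_rw 2 [hswap]
  rw [← Finset.sum_add_distrib]
  exact Finset.sum_congr rfl fun i _ => by
    rw [← Finset.sum_add_distrib]
    exact Finset.sum_congr rfl fun j _ => by ring

theorem posSemidef_weightedLaplacian {A : Matrix n n ℝ} (hA : A.IsSymm)
    (hnonneg : ∀ i j, 0 ≤ A i j) : A.weightedLaplacian.PosSemidef := by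
  refine .of_dotProduct_mulVec_nonneg ?_ fun x => ?_
  · exact isHermitian_iff_isSymm.mpr ((isSymm_diagonal _).sub hA)
  · have hsum := two_mul_dotProduct_weightedLaplacian_mulVec hA x
    have : 0 ≤ ∑ i, ∑ j, A i j * (x i - x j) ^ 2 :=
      Finset.sum_nonneg fun i _ => Finset.sum_nonneg fun j _ =>
        mul_nonneg (hnonneg i j) (sq_nonneg _)
    rw [star_trivial]
    linarith

theorem spectrum_eq_of_charpoly_eq {K : Type*} [Field K] {M N : Matrix n n K}
    (h : M.charpoly = N.charpoly) : spectrum K M = spectrum K N := by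
  ext r
  rw [mem_spectrum_iff_isRoot_charpoly, mem_spectrum_iff_isRoot_charpoly, h]

open scoped ComplexOrder in
theorem PosSemidef.of_spectrum_eq {𝕜 : Type*} [RCLike 𝕜] {M N : Matrix n n 𝕜}
    (hM : M.PosSemidef) (hN : N.IsHermitian) (h : spectrum ℝ N = spectrum ℝ M) :
    N.PosSemidef := by
  refine hN.posSemidef_iff_eigenvalues_nonneg.mpr fun i => ?_
  obtain ⟨j, hj⟩ : hN.eigenvalues i ∈ Set.range hM.1.eigenvalues := by
    rw [← hM.1.spectrum_real_eq_range_eigenvalues, ← h]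
    exact hN.eigenvalues_mem_spectrum_real i
  exact hj ▸ hM.eigenvalues_nonneg j

theorem sum_add_eq_zero_of_charpoly_eq {R : Type*} [CommRing R] (A : Matrix n n R)
    {d e : n → R} (h : (A + diagonal d).charpoly = (A - diagonal e).charpoly) :
    ∑ i, (e i + d i) = 0 := by
  have htrace : (A + diagonal d).trace = (A - diagonal e).trace := by
    rw [trace_eq_neg_charpoly_nextCoeff, h, ← trace_eq_neg_charpoly_nextCoeff]
  rw [trace_add, trace_sub, trace_diagonal, trace_diagonal] at htrace
  rw [Finset.sum_add_distrib]
  linear_combination htrace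

end Matrix

theorem degree_potential_characterization_general (V : Type*) [Fintype V] [DecidableEq V]
    (A : Matrix V V ℝ) (hA : A.IsSymm)
    (hnat : ∀ u v, ∃ m : ℕ, A u v = m)
    (κ : V → ℝ) (hκ : ∀ v, κ v = ∑ u, A v u)
    (q : V → ℝ)
    (hspec : (A + Matrix.diagonal q).charpoly = (A - Matrix.diagonal κ).charpoly) :
    q = fun v => -κ v := by
  have hnonneg : ∀ u v, 0 ≤ A u v := fun u v => by
    obtain ⟨m, hm⟩ := hnat u v
    exact hm ▸ m.cast_nonneg
  have hpsd : (-(A + diagonal q)).PosSemidef := by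
    refine (posSemidef_weightedLaplacian hA hnonneg).of_spectrum_eq ?_ ?_
    · exact isHermitian_iff_isSymm.mpr (hA.add (isSymm_diagonal q)).neg
    · rw [← spectrum.neg_eq, spectrum_eq_of_charpoly_eq hspec, spectrum.neg_eq, neg_sub,
        weightedLaplacian, funext hκ]
  have hrow : ∀ v, ((A + diagonal q) *ᵥ fun _ => 1) v = κ v + q v := fun v => by
    rw [add_mulVec, Pi.add_apply, mulVec_diagonal, hκ v]
    simp [mulVec, dotProduct]
  have hker : (-(A + diagonal q)) *ᵥ (fun _ => 1) = 0 := by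
    refine (hpsd.dotProduct_mulVec_zero_iff _).mp ?_
    simp only [star_trivial, neg_mulVec, dotProduct, Pi.neg_apply, hrow, one_mul]
    rw [Finset.sum_neg_distrib, sum_add_eq_zero_of_charpoly_eq A hspec, neg_zero]
  funext v
  have := congrFun hker v
  rw [neg_mulVec, Pi.neg_apply, hrow, Pi.zero_apply] at this
  linarith

/-- Spectral characterization of the degree potential: if `A + diag q` is
isospectral (for the periodic spectrum) to `A - diag κ`, then `q = -κ`. -/
theorem degree_potential_characterization (V : Type*) [Fintype V] [DecidableEq V]
    (A : Matrix V V ℝ) (hA : A.IsSymm) (hdiag : ∀ v, A v v = 0)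
    (hnat : ∀ u v, ∃ m : ℕ, A u v = m)
    (κ : V → ℝ) (hκ : ∀ v, κ v = ∑ u, A v u)
    (q : V → ℝ)
    (hspec : (A + Matrix.diagonal q).charpoly = (A - Matrix.diagonal κ).charpoly) :
    q = fun v => -κ v :=
  degree_potential_characterization_general V A hA hnat κ hκ q hspec
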